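/- arXiv:1901.08464 — 2 statements merged into one kernel-verified Lean document; each statement's English description precedes it below -/
import Mathlib

section
/- Let 𝒯₀ be an E-closed set of complete L-theories and let 𝒯'₀ be a generating set for 𝒯₀. Then the following are equivalent: (1) 𝒯'₀ is the least generating set for 𝒯₀; (2) 𝒯'₀ is a minimal generating set for 𝒯₀; (3) every theory in 𝒯'₀ is isolated by some set (𝒯'₀)_φ, i.e., for every T ∈ 𝒯'₀ there is a sentence φ ∈ T with (𝒯'₀)_φ = {T}; (4) every theory in 𝒯'₀ is isolated by some set (𝒯₀)_φ, i.e., for every T ∈ 𝒯'₀ there is a sentence φ ∈ T with (𝒯₀)_φ = {T}. -/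
/-! A theory of a generating set that is not isolated in it is an accumulation point of the
remaining theories, so it can be dropped without changing the closure. Conversely, a theory
isolated in `𝒯₀` by `φ` is an accumulation point of no subset of `𝒯₀` (its `φ`-neighbourhood is
finite), so it lies in every generating set. -/

open FirstOrder Language Cardinal Set

universe u v w

variable {L : FirstOrder.Language.{u, v}}

/-- A complete theory: a satisfiable set of sentences containing each sentence or its
negation (`Theory.IsMaximal` in Mathlib). -/
abbrev CTheory (L : FirstOrder.Language.{u, v}) : Type max u v :=
  {T : L.Theory // T.IsMaximal}

/-- The neighbourhood `𝒯_φ = {T ∈ 𝒯 | φ ∈ T}`. -/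
def nbhd (𝒯 : Set (CTheory L)) (φ : L.Sentence) : Set (CTheory L) :=
  {T | T ∈ 𝒯 ∧ φ ∈ T.1}

/-- `T` is an accumulation point of `𝒯` if for every sentence `φ ∈ T` the set `𝒯_φ` is
infinite. -/
def IsAccPoint (𝒯 : Set (CTheory L)) (T : CTheory L) : Prop :=
  ∀ φ : L.Sentence, φ ∈ T.1 → (nbhd 𝒯 φ).Infinite

/-- The `E`-closure of `𝒯`: `𝒯` together with all its accumulation points. -/
def ClE (𝒯 : Set (CTheory L)) : Set (CTheory L) :=
  𝒯 ∪ {T | IsAccPoint 𝒯 T}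

/-- The `e`-spectrum of `𝒯`: the cardinality of the set of accumulation points of `𝒯`. -/
noncomputable def eSp (𝒯 : Set (CTheory L)) : Cardinal :=
  Cardinal.mk {T : CTheory L // IsAccPoint 𝒯 T}

/-- Two sentences are inconsistent if `{φ, ψ}` is unsatisfiable. -/
def Inconsistent (φ ψ : L.Sentence) : Prop :=
  ¬ FirstOrder.Language.Theory.IsSatisfiable ({φ, ψ} : L.Theory)

open Classical in
/-- `RSge α 𝒯` says `RS(𝒯) ≥ α`: `RS(𝒯) ≥ 0` iff `𝒯 ≠ ∅`; `RS(𝒯) ≥ 1` iff `𝒯` is infinite;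
for `β ≥ 1`, `RS(𝒯) ≥ β + 1` iff there are pairwise inconsistent sentences `φ_n`, `n ∈ ℕ`,
with `RS(𝒯_{φ_n}) ≥ β` for all `n`; for limit `λ`, `RS(𝒯) ≥ λ` iff `RS(𝒯) ≥ β` for all
`β < λ`. -/
noncomputable def RSge (α : Ordinal.{w}) : Set (CTheory L) → Prop :=
  @Ordinal.limitRecOn (fun _ => Set (CTheory L) → Prop) α
    (fun 𝒯 => 𝒯.Nonempty)
    (fun β ih 𝒯 =>
      if β = 0 then 𝒯.Infinite
      else ∃ φ : ℕ → L.Sentence,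
        (∀ m n : ℕ, m ≠ n → Inconsistent (φ m) (φ n)) ∧ ∀ k : ℕ, ih (nbhd 𝒯 (φ k)))
    (fun β _ ih 𝒯 => ∀ γ : Ordinal, ∀ h : γ < β, ih γ h 𝒯)

/-- `RS(𝒯) = α` for an ordinal `α`: `RS(𝒯) ≥ α` but not `RS(𝒯) ≥ α + 1`. -/
def RSeq (𝒯 : Set (CTheory L)) (α : Ordinal.{w}) : Prop :=
  RSge α 𝒯 ∧ ¬ RSge (α + 1) 𝒯

/-- `RS(𝒯) = ∞`: `RS(𝒯) ≥ α` for every ordinal `α`. -/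
def RSinf (𝒯 : Set (CTheory L)) : Prop :=
  ∀ α : Ordinal.{w}, RSge α 𝒯

/-- `ds(𝒯) = n` (relative to `RS(𝒯) = α`): `n` is the largest natural number for which
there exist `n` pairwise inconsistent sentences `φ_1, …, φ_n` with `RS(𝒯_{φ_i}) = α`. -/
def dsEq (𝒯 : Set (CTheory L)) (α : Ordinal.{w}) (n : ℕ) : Prop :=
  IsGreatest {m : ℕ | ∃ φ : Fin m → L.Sentence,
    (∀ i j : Fin m, i ≠ j → Inconsistent (φ i) (φ j)) ∧
    ∀ i : Fin m, RSeq (nbhd 𝒯 (φ i)) α} n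

/-- `𝒯` is `e`-minimal: for every sentence `φ`, `𝒯_φ` is finite or `𝒯_{¬φ}` is finite. -/
def EMinimal (𝒯 : Set (CTheory L)) : Prop :=
  ∀ φ : L.Sentence, (nbhd 𝒯 φ).Finite ∨ (nbhd 𝒯 φ.not).Finite

/-- `𝒯` is `a`-minimal: `𝒯` has infinitely many accumulation points and for every sentence
`φ`, `𝒯_φ` or `𝒯_{¬φ}` has only finitely many accumulation points. -/
def AMinimal (𝒯 : Set (CTheory L)) : Prop :=
  {T : CTheory L | IsAccPoint 𝒯 T}.Infinite ∧
  ∀ φ : L.Sentence,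
    {T : CTheory L | IsAccPoint (nbhd 𝒯 φ) T}.Finite ∨
    {T : CTheory L | IsAccPoint (nbhd 𝒯 φ.not) T}.Finite

/-- `𝒯` is `α`-minimal: `RS(𝒯) = α` and for every sentence `φ`, `RS(𝒯_φ) < α` or
`RS(𝒯_{¬φ}) < α`. -/
def AlphaMinimal (𝒯 : Set (CTheory L)) (α : Ordinal.{w}) : Prop :=
  RSeq 𝒯 α ∧
  ∀ φ : L.Sentence, ¬ RSge α (nbhd 𝒯 φ) ∨ ¬ RSge α (nbhd 𝒯 φ.not)

/-- `𝒯'` is a generating set for the `E`-closed set `𝒯₀`. -/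
def Generates (𝒯' 𝒯₀ : Set (CTheory L)) : Prop :=
  𝒯' ⊆ 𝒯₀ ∧ ClE 𝒯' = 𝒯₀


namespace CTheory

theorem mem_iff_realize (T : CTheory L) (φ : L.Sentence) : φ ∈ T.1 ↔ T.2.1.some ⊨ φ := by
  rw [T.2.mem_iff_models, T.2.isComplete.realize_sentence_iff]

theorem inf_mem_iff {T : CTheory L} {φ ψ : L.Sentence} :
    φ ⊓ ψ ∈ T.1 ↔ φ ∈ T.1 ∧ ψ ∈ T.1 := by
  simp only [mem_iff_realize, Sentence.realize_inf]

theorem not_mem_iff {T : CTheory L} {φ : L.Sentence} : φ.not ∈ T.1 ↔ φ ∉ T.1 := by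
  refine ⟨fun hnot hφ => ?_, (T.2.mem_or_not_mem φ).resolve_left⟩
  rw [mem_iff_realize] at hφ hnot
  exact (Sentence.realize_not _).1 hnot hφ

theorem eq_of_subset {S T : CTheory L} (h : T.1 ⊆ S.1) : S = T :=
  Subtype.ext <| Subset.antisymm
    (fun φ hφ => (T.2.mem_or_not_mem φ).resolve_right fun hnot => not_mem_iff.1 (h hnot) hφ) h

theorem exists_mem_notMem_of_ne {S T : CTheory L} (h : S ≠ T) : ∃ ψ ∈ T.1, ψ ∉ S.1 :=
  not_subset.1 (mt eq_of_subset h)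

/-- A theory is separated from finitely many others by a single sentence, the conjunction of
sentences separating it from each of them. -/
theorem exists_separating_sentence {T : CTheory L} {φ : L.Sentence} (hφ : φ ∈ T.1)
    {G : Set (CTheory L)} (hG : G.Finite) (hTG : T ∉ G) :
    ∃ χ ∈ T.1, ∀ S : CTheory L, χ ∈ S.1 → φ ∈ S.1 ∧ S ∉ G := by
  induction G, hG using Set.Finite.induction_on with
  | empty => exact ⟨φ, hφ, fun _ hS => ⟨hS, notMem_empty _⟩⟩
  | @insert S₀ G _ _ ih =>
    obtain ⟨χ, hχT, hχ⟩ := ih fun hT => hTG (mem_insert_of_mem _ hT)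
    obtain ⟨ψ, hψT, hψS₀⟩ := exists_mem_notMem_of_ne (S := S₀) fun h => hTG (h ▸ mem_insert _ _)
    refine ⟨χ ⊓ ψ, inf_mem_iff.2 ⟨hχT, hψT⟩, fun S hS => ?_⟩
    obtain ⟨hχS, hψS⟩ := inf_mem_iff.1 hS
    exact ⟨(hχ S hχS).1, fun hSG => hSG.elim (fun h => hψS₀ (h ▸ hψS)) (hχ S hχS).2⟩

end CTheory

section Closure

variable {𝒮 𝒯 : Set (CTheory L)} {S T : CTheory L} {φ : L.Sentence}

theorem nbhd_mono (h : 𝒮 ⊆ 𝒯) (φ : L.Sentence) : nbhd 𝒮 φ ⊆ nbhd 𝒯 φ :=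
  fun _ hS => ⟨h hS.1, hS.2⟩

theorem IsAccPoint.mono (h : 𝒮 ⊆ 𝒯) (hT : IsAccPoint 𝒮 T) : IsAccPoint 𝒯 T :=
  fun φ hφ => (hT φ hφ).mono (nbhd_mono h φ)

theorem ClE_mono (h : 𝒮 ⊆ 𝒯) : ClE 𝒮 ⊆ ClE 𝒯 :=
  union_subset_union h fun _ hT => hT.mono h

theorem mem_of_mem_ClE_of_nbhd_finite (hT : T ∈ ClE 𝒯) (hφ : φ ∈ T.1)
    (hfin : (nbhd 𝒯 φ).Finite) : T ∈ 𝒯 :=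
  hT.resolve_right fun hacc => hacc φ hφ hfin

theorem nbhd_ClE_of_finite (hfin : (nbhd 𝒯 φ).Finite) : nbhd (ClE 𝒯) φ = nbhd 𝒯 φ :=
  (nbhd_mono subset_union_left φ).antisymm' fun _ ⟨hS, hφS⟩ =>
    ⟨mem_of_mem_ClE_of_nbhd_finite hS hφS hfin, hφS⟩

theorem IsAccPoint.sdiff_singleton (hS : IsAccPoint 𝒯 S) (T : CTheory L) :
    IsAccPoint (𝒯 \ {T}) S := fun φ hφ =>
  ((hS φ hφ).sdiff (finite_singleton T)).mono fun _ h => ⟨⟨h.1.1, h.2⟩, h.1.2⟩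

theorem ClE_sdiff_singleton (h : IsAccPoint (𝒯 \ {T}) T) : ClE (𝒯 \ {T}) = ClE 𝒯 := by
  refine (ClE_mono sdiff_subset).antisymm ?_
  rintro S (hS | hS)
  · by_cases hST : S = T
    · exact Or.inr (hST ▸ h)
    · exact Or.inl ⟨hS, hST⟩
  · exact Or.inr (hS.sdiff_singleton T)

theorem exists_nbhd_eq_singleton_of_not_isAccPoint (hT : T ∈ 𝒯)
    (h : ¬ IsAccPoint (𝒯 \ {T}) T) : ∃ χ ∈ T.1, nbhd 𝒯 χ = {T} := by
  simp only [IsAccPoint, not_forall, not_infinite] at h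
  obtain ⟨φ, hφ, hfin⟩ := h
  obtain ⟨χ, hχT, hχ⟩ :=
    CTheory.exists_separating_sentence hφ hfin fun hT => hT.1.2 rfl
  refine ⟨χ, hχT, Subset.antisymm (fun S ⟨hS, hχS⟩ => ?_) (singleton_subset_iff.2 ⟨hT, hχT⟩)⟩
  by_contra hST
  exact (hχ S hχS).2 ⟨⟨hS, hST⟩, (hχ S hχS).1⟩

end Closure

theorem least_generating_tfae_general (𝒯₀ 𝒯' : Set (CTheory L))
    (hgen : Generates 𝒯' 𝒯₀) :
    List.TFAE
      [∀ 𝒮 : Set (CTheory L), Generates 𝒮 𝒯₀ → 𝒯' ⊆ 𝒮,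
       ∀ 𝒮 : Set (CTheory L), 𝒮 ⊆ 𝒯' → Generates 𝒮 𝒯₀ → 𝒮 = 𝒯',
       ∀ T ∈ 𝒯', ∃ φ ∈ T.1, nbhd 𝒯' φ = {T},
       ∀ T ∈ 𝒯', ∃ φ ∈ T.1, nbhd 𝒯₀ φ = {T}] := by
  obtain ⟨hsub, hcl⟩ := hgen
  tfae_have 1 → 2
  | h1, 𝒮, h𝒮, h𝒮gen => h𝒮.antisymm (h1 𝒮 h𝒮gen)
  tfae_have 2 → 3
  | h2, T, hT => by
    by_contra hniso
    have hacc : IsAccPoint (𝒯' \ {T}) T :=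
      by_contra fun h => hniso (exists_nbhd_eq_singleton_of_not_isAccPoint hT h)
    have hgen' : Generates (𝒯' \ {T}) 𝒯₀ :=
      ⟨sdiff_subset.trans hsub, (ClE_sdiff_singleton hacc).trans hcl⟩
    have heq : 𝒯' \ {T} = 𝒯' := h2 _ sdiff_subset hgen'
    exact (heq.symm ▸ hT : T ∈ 𝒯' \ {T}).2 rfl
  tfae_have 3 → 4
  | h3, T, hT => by
    obtain ⟨φ, hφ, hiso⟩ := h3 T hT
    refine ⟨φ, hφ, ?_⟩
    rw [← hcl, nbhd_ClE_of_finite (hiso ▸ finite_singleton T), hiso]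
  tfae_have 4 → 1
  | h4, 𝒮, ⟨h𝒮, h𝒮cl⟩, T, hT => by
    obtain ⟨φ, hφ, hiso⟩ := h4 T hT
    have hfin : (nbhd 𝒮 φ).Finite := (finite_singleton T).subset (hiso ▸ nbhd_mono h𝒮 φ)
    exact mem_of_mem_ClE_of_nbhd_finite (h𝒮cl ▸ hsub hT) hφ hfin
  tfae_finish

/-- Theorem 1.3: for an `E`-closed set `𝒯₀` with generating set `𝒯'`, the
following are equivalent: (1) `𝒯'` is the least generating set; (2) `𝒯'` is a minimal
generating set; (3) every theory of `𝒯'` is isolated by some `(𝒯')_φ`; (4) every theory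
of `𝒯'` is isolated by some `(𝒯₀)_φ`. -/
theorem least_generating_tfae (𝒯₀ 𝒯' : Set (CTheory L))
    (hclosed : ClE 𝒯₀ = 𝒯₀) (hgen : Generates 𝒯' 𝒯₀) :
    List.TFAE
      [∀ 𝒮 : Set (CTheory L), Generates 𝒮 𝒯₀ → 𝒯' ⊆ 𝒮,
       ∀ 𝒮 : Set (CTheory L), 𝒮 ⊆ 𝒯' → Generates 𝒮 𝒯₀ → 𝒮 = 𝒯',
       ∀ T ∈ 𝒯', ∃ φ ∈ T.1, nbhd 𝒯' φ = {T},
       ∀ T ∈ 𝒯', ∃ φ ∈ T.1, nbhd 𝒯₀ φ = {T}] :=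
  least_generating_tfae_general 𝒯₀ 𝒯' hgen
end

section
/- Let 𝒯 be a family of complete L-theories and let (φ_k), k ∈ ℕ, be pairwise inconsistent L-sentences such that each 𝒯_{φ_k} is infinite. Then there exists an accumulation point T of 𝒯 with ¬φ_k ∈ T for every k ∈ ℕ; in particular, T is not an accumulation point of any of the families 𝒯_{φ_k}. -/
open FirstOrder Language Cardinal Set

universe u v w

variable {L : FirstOrder.Language.{u, v}}

/- Pick `T_k ∈ 𝒯_{φ_k}`. By inconsistency `φ_k ∈ T_m` only for `m = k`, so the `T_k` are
pairwise distinct. Their limit along a nonprincipal ultrafilter on `ℕ` is a complete theory whose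
sentences each lie in ultrafilter-many, hence infinitely many, `T_k`, and which contains every
`¬φ_k`. -/

theorem CTheory.not_mem_iff_s9 (T : CTheory L) (ψ : L.Sentence) : ψ.not ∈ T.1 ↔ ψ ∉ T.1 := by
  refine ⟨fun hnot hψ => ?_, (T.2.mem_or_not_mem ψ).resolve_left⟩
  obtain ⟨M⟩ := T.2.1
  exact (Sentence.realize_not M).1 (M.is_model.realize_of_mem _ hnot)
    (M.is_model.realize_of_mem _ hψ)

theorem Inconsistent.notMem_of_mem {φ ψ : L.Sentence} (h : Inconsistent φ ψ) {T : CTheory L}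
    (hφ : φ ∈ T.1) : ψ ∉ T.1 := fun hψ =>
  h (T.2.1.mono (insert_subset hφ (singleton_subset_iff.2 hψ)))

theorem nbhd_nbhd_not (𝒯 : Set (CTheory L)) (φ : L.Sentence) : nbhd (nbhd 𝒯 φ) φ.not = ∅ :=
  eq_empty_of_forall_notMem fun T ⟨⟨_, hφ⟩, hnot⟩ => (T.not_mem_iff_s9 φ).1 hnot hφ

theorem not_isAccPoint_nbhd {𝒯 : Set (CTheory L)} {φ : L.Sentence} {T : CTheory L}
    (h : φ.not ∈ T.1) : ¬ IsAccPoint (nbhd 𝒯 φ) T := fun hT =>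
  hT _ h (by rw [nbhd_nbhd_not]; exact finite_empty)

section PairwiseInconsistent

variable {ι : Type*} {φ : ι → L.Sentence} (hinc : ∀ m n, m ≠ n → Inconsistent (φ m) (φ n))
  {T : ι → CTheory L} (hT : ∀ k, φ k ∈ (T k).1)
include hinc hT

theorem not_mem_of_pairwise_inconsistent {m k : ι} (hmk : m ≠ k) : (φ k).not ∈ (T m).1 :=
  ((T m).not_mem_iff_s9 _).2 ((hinc m k hmk).notMem_of_mem (hT m))

theorem injective_of_pairwise_inconsistent : Function.Injective T := by
  intro m n hmn
  by_contra hne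
  exact (hinc m n hne).notMem_of_mem (hT m) (hmn ▸ hT n)

end PairwiseInconsistent

namespace CTheory

variable {ι : Type*}

theorem isMaximal_setOf_eventually_mem (U : Ultrafilter ι) (T : ι → CTheory L) :
    Theory.IsMaximal {ψ : L.Sentence | ∀ᶠ i in U, ψ ∈ (T i).1} := by
  refine ⟨Theory.isSatisfiable_iff_isFinitelySatisfiable.2 fun s hs => ?_, fun ψ => ?_⟩
  · obtain ⟨i, hi⟩ := ((Filter.eventually_all_finset s).2 fun ψ hψ => hs hψ).exists
    exact (T i).2.1.mono hi
  · exact U.eventually_or.1 (.of_forall fun i => (T i).2.mem_or_not_mem ψ)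

def ultralimit (U : Ultrafilter ι) (T : ι → CTheory L) : CTheory L :=
  ⟨{ψ | ∀ᶠ i in U, ψ ∈ (T i).1}, isMaximal_setOf_eventually_mem U T⟩

theorem mem_ultralimit {U : Ultrafilter ι} {T : ι → CTheory L} {ψ : L.Sentence} :
    ψ ∈ (ultralimit U T).1 ↔ ∀ᶠ i in U, ψ ∈ (T i).1 :=
  Iff.rfl

theorem isAccPoint_ultralimit {𝒯 : Set (CTheory L)} {U : Ultrafilter ι}
    (hU : (U : Filter ι) ≤ Filter.cofinite) {T : ι → CTheory L} (hT : Function.Injective T)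
    (h𝒯 : ∀ i, T i ∈ 𝒯) : IsAccPoint 𝒯 (ultralimit U T) := by
  intro ψ hψ hfin
  have hout : ∀ᶠ i in U, T i ∉ nbhd 𝒯 ψ :=
    (hT.tendsto_cofinite.mono_left hU).eventually hfin.compl_mem_cofinite
  obtain ⟨i, hψi, hi⟩ := (mem_ultralimit.1 hψ |>.and hout).exists
  exact hi ⟨h𝒯 i, hψi⟩

end CTheory

/-- Proposition 2.8: if `φ_k`, `k ∈ ℕ`, are pairwise inconsistent sentences
with each `𝒯_{φ_k}` infinite, then `𝒯` has an accumulation point `T` containing every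
`¬φ_k`; in particular, `T` is not an accumulation point of any `𝒯_{φ_k}`. -/
theorem accumulation_point_avoiding (𝒯 : Set (CTheory L)) (φ : ℕ → L.Sentence)
    (hinc : ∀ m n : ℕ, m ≠ n → Inconsistent (φ m) (φ n))
    (hinf : ∀ k : ℕ, (nbhd 𝒯 (φ k)).Infinite) :
    ∃ T : CTheory L, IsAccPoint 𝒯 T ∧ (∀ k : ℕ, (φ k).not ∈ T.1) ∧
      ∀ k : ℕ, ¬ IsAccPoint (nbhd 𝒯 (φ k)) T := by
  choose T hT using fun k => (hinf k).nonempty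
  have hTφ : ∀ k, φ k ∈ (T k).1 := fun k => (hT k).2
  let U : Ultrafilter ℕ := .of Filter.cofinite
  have hU : (U : Filter ℕ) ≤ Filter.cofinite := Ultrafilter.of_le _
  have hnot : ∀ k, (φ k).not ∈ (CTheory.ultralimit U T).1 := fun k =>
    Filter.Eventually.mono (hU (Filter.eventually_cofinite_ne k)) fun _ hmk =>
      not_mem_of_pairwise_inconsistent hinc hTφ hmk
  have hacc : IsAccPoint 𝒯 (CTheory.ultralimit U T) :=
    CTheory.isAccPoint_ultralimit hU (injective_of_pairwise_inconsistent hinc hTφ)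
      fun k => (hT k).1
  exact ⟨CTheory.ultralimit U T, hacc, hnot, fun k => not_isAccPoint_nbhd (hnot k)⟩
end
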